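/- Finite zero-sum game minimax (von Neumann, expressed for the ratio matrix): For any R : S × P → ℝ with S, P nonempty finite sets, sup over distributions g on P of (min_s ∑_p g(p) R(s,p)) equals inf over distributions f on S of (max_p ∑_s f(s) R(s,p)); i.e., the lower bound from Yao's principle is always tight in the finite case. -/

import Mathlib

/-!
The payoff `x ⬝ᵥ A *ᵥ y` is bilinear, hence by Sion's minimax theorem it has a saddle point
`(a, b)` on `Δ(S) × Δ(P)`. Testing the saddle inequality at vertices of the simplices gives
`max_p (a ᵥ* A) p ≤ min_s (A *ᵥ b) s`, while averaging gives `min_s (A *ᵥ y) s ≤ max_p (x ᵥ* A) p`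
for all mixed strategies `x, y`; so the supremum and the infimum meet.
-/

open Finset Matrix

section StdSimplex

variable {ι : Type*} [Fintype ι] [Nonempty ι] {x : ι → ℝ}

lemma inf'_le_dotProduct_of_mem_stdSimplex (v : ι → ℝ) (hx : x ∈ stdSimplex ℝ ι) :
    univ.inf' univ_nonempty v ≤ x ⬝ᵥ v := calc
  univ.inf' univ_nonempty v = ∑ i, x i * univ.inf' univ_nonempty v := by
    rw [← sum_mul, hx.2, one_mul]
  _ ≤ x ⬝ᵥ v := sum_le_sum fun i _ => mul_le_mul_of_nonneg_left (inf'_le v (mem_univ i)) (hx.1 i)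

lemma dotProduct_le_sup'_of_mem_stdSimplex (v : ι → ℝ) (hx : x ∈ stdSimplex ℝ ι) :
    x ⬝ᵥ v ≤ univ.sup' univ_nonempty v := calc
  x ⬝ᵥ v ≤ ∑ i, x i * univ.sup' univ_nonempty v :=
    sum_le_sum fun i _ => mul_le_mul_of_nonneg_left (le_sup' v (mem_univ i)) (hx.1 i)
  _ = univ.sup' univ_nonempty v := by rw [← sum_mul, hx.2, one_mul]

end StdSimplex

theorem ciSup_eq_ciInf_of_forall_le {α ι κ : Type*} [ConditionallyCompleteLattice α]
    {f : ι → α} {g : κ → α} (hfg : ∀ i j, f i ≤ g j) (i₀ : ι) (j₀ : κ) (h₀ : g j₀ ≤ f i₀) :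
    ⨆ i, f i = ⨅ j, g j :=
  have : Nonempty ι := ⟨i₀⟩
  have : Nonempty κ := ⟨j₀⟩
  le_antisymm (ciSup_le fun i => le_ciInf fun j => hfg i j)
    ((ciInf_le ⟨f i₀, Set.forall_mem_range.2 (hfg i₀)⟩ j₀).trans
      (h₀.trans (le_ciSup ⟨g j₀, Set.forall_mem_range.2 (hfg · j₀)⟩ i₀)))

namespace Matrix

variable {S P : Type*} [Fintype S] [Fintype P] [Nonempty S] [Nonempty P] (A : Matrix S P ℝ)

theorem inf'_mulVec_le_sup'_vecMul {x : S → ℝ} {y : P → ℝ} (hx : x ∈ stdSimplex ℝ S)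
    (hy : y ∈ stdSimplex ℝ P) :
    univ.inf' univ_nonempty (A *ᵥ y) ≤ univ.sup' univ_nonempty (x ᵥ* A) := calc
  _ ≤ x ⬝ᵥ (A *ᵥ y) := inf'_le_dotProduct_of_mem_stdSimplex _ hx
  _ = y ⬝ᵥ (x ᵥ* A) := by rw [dotProduct_mulVec, dotProduct_comm]
  _ ≤ _ := dotProduct_le_sup'_of_mem_stdSimplex _ hy

theorem exists_isSaddlePointOn_stdSimplex :
    ∃ x ∈ stdSimplex ℝ S, ∃ y ∈ stdSimplex ℝ P,
      IsSaddlePointOn (stdSimplex ℝ S) (stdSimplex ℝ P) (fun x y => x ⬝ᵥ (A *ᵥ y)) x y := by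
  classical
  let B : (S → ℝ) →ₗ[ℝ] (P → ℝ) →ₗ[ℝ] ℝ := toLinearMap₂' ℝ A
  have hB : ∀ x y, B x y = x ⬝ᵥ (A *ᵥ y) := toLinearMap₂'_apply' A
  simp_rw [← hB]
  exact Sion.exists_isSaddlePointOn ⟨_, single_mem_stdSimplex ℝ (Classical.arbitrary S)⟩
    (convex_stdSimplex ℝ S) (isCompact_stdSimplex ℝ S)
    (fun y _ =>
      (B.flip y).continuous_of_finiteDimensional.lowerSemicontinuous.lowerSemicontinuousOn _)
    (fun y _ => ((B.flip y).convexOn (convex_stdSimplex ℝ S)).quasiconvexOn)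
    (convex_stdSimplex ℝ P) ⟨_, single_mem_stdSimplex ℝ (Classical.arbitrary P)⟩
    (isCompact_stdSimplex ℝ P)
    (fun x _ =>
      (B x).continuous_of_finiteDimensional.upperSemicontinuous.upperSemicontinuousOn _)
    (fun x _ => ((B x).concaveOn (convex_stdSimplex ℝ P)).quasiconcaveOn)

theorem sup'_vecMul_le_inf'_mulVec_of_isSaddlePointOn {a : S → ℝ} {b : P → ℝ}
    (h : IsSaddlePointOn (stdSimplex ℝ S) (stdSimplex ℝ P) (fun x y => x ⬝ᵥ (A *ᵥ y)) a b) :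
    univ.sup' univ_nonempty (a ᵥ* A) ≤ univ.inf' univ_nonempty (A *ᵥ b) := by
  classical
  refine sup'_le _ _ fun p _ => le_inf' _ _ fun s _ => ?_
  have : a ⬝ᵥ A *ᵥ Pi.single p 1 ≤ Pi.single s 1 ⬝ᵥ A *ᵥ b :=
    h _ (single_mem_stdSimplex ℝ s) _ (single_mem_stdSimplex ℝ p)
  rwa [dotProduct_mulVec, dotProduct_single_one, single_one_dotProduct] at this

end Matrix

theorem finite_minimax_theorem {S P : Type*} [Fintype S] [Fintype P] [Nonempty S] [Nonempty P]
    (R : S → P → ℝ) :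
    (⨆ g : {g : P → ℝ // (∀ p, 0 ≤ g p) ∧ ∑ p, g p = 1},
        Finset.univ.inf' Finset.univ_nonempty (fun s => ∑ p, g.1 p * R s p)) =
    (⨅ f : {f : S → ℝ // (∀ s, 0 ≤ f s) ∧ ∑ s, f s = 1},
        Finset.univ.sup' Finset.univ_nonempty (fun p => ∑ s, f.1 s * R s p)) := by
  -- the left side is `g ᵥ* (of R)ᵀ` by unfolding
  have hrow (g : P → ℝ) : (fun s => ∑ p, g p * R s p) = of R *ᵥ g := vecMul_transpose _ _
  obtain ⟨a, ha, b, hb, hab⟩ := (of R).exists_isSaddlePointOn_stdSimplex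
  simp only [hrow]
  exact ciSup_eq_ciInf_of_forall_le (fun g f => (of R).inf'_mulVec_le_sup'_vecMul f.2 g.2)
    ⟨b, hb⟩ ⟨a, ha⟩ ((of R).sup'_vecMul_le_inf'_mulVec_of_isSaddlePointOn hab)
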